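/- For any bi-infinite sequence B ∈ {1,2}^ℤ containing the subsequence 2,2,2,1,2,1,1,2,2,2,1,2*,1,1,2,2,2,1,2,1,1,2,2 with the asterisk at position j, one has λ_j(B) < [2;1,1,2,2,2,1,2,1,1,2,2] + [0;1,2,2,2,1,1,2,1,2,2,2] = 12230321/3713986 < α₂ − 3·10^{-8}, where α₂ := [2; \overline{1,1,2,2,2,1,2}] + [0; 1,2,2,2,1,1,2,1,2,2, \overline{1,2,1,1,2,2,2}]. -/

import Mathlib

/-!
Write `[l; t]` (`cfWithTail l t`) for the continued fraction with partial quotients `l` followed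
by a real tail `t > 0`; it is monotone in `t` when `l` has even length. If all partial quotients
from position `N` on are 1 or 2, every convergent of the tail from `N` lies in `[1, 3]`, so for
even `N` an infinite continued fraction lies between `[l; 1]` and `[l; 3]`, where `l` lists its
first `N` quotients. With `N = 12` on both sides of `j` the pattern gives
`λ_j(B) ≤ [2;1,1,2,2,2,1,2,1,1,2,2,3] + [0;1,2,2,2,1,1,2,1,2,2,2,3]`, and with `N = 28` and
`N = 32` the periodic expansions bound `α₂` from below; what is left compares explicit rationals.
-/

open Filter Topology

/-- Value of a finite continued fraction `[a₀; a₁, …, aₙ]` with natural-number entries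
(the empty list has value 0, and a trailing `1/0 = 0` convention makes the recursion correct). -/
noncomputable def cfList : List ℕ → ℝ
  | [] => 0
  | a :: l => (a : ℝ) + 1 / cfList l

/-- `n`-th convergent `[a 0; a 1, …, a n]` of the infinite continued fraction with entries `a`. -/
noncomputable def cfConvs (a : ℕ → ℕ) (n : ℕ) : ℝ :=
  cfList ((List.range (n + 1)).map a)

/-- `CFLim a x` : the infinite continued fraction `[a 0; a 1, a 2, …]` converges to `x`. -/
def CFLim (a : ℕ → ℕ) (x : ℝ) : Prop :=
  Tendsto (cfConvs a) atTop (nhds x)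

/-- The eventually periodic sequence of partial quotients with preperiod `pre` and period `per`. -/
def epseq (pre per : List ℕ) : ℕ → ℕ :=
  fun n => if n < pre.length then pre.getD n 0 else per.getD ((n - pre.length) % per.length) 0

/-- `IsLambda B j v` : for the bi-infinite sequence `B`,
`v = λ_j(B) = [B j; B (j+1), …] + [0; B (j-1), B (j-2), …]`. -/
def IsLambda (B : ℤ → ℕ) (j : ℤ) (v : ℝ) : Prop :=
  ∃ x y : ℝ,
    CFLim (fun n => B (j + n)) x ∧
    CFLim (fun n => if n = 0 then 0 else B (j - n)) y ∧
    v = x + y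

open Set

noncomputable def cfWithTail : List ℕ → ℝ → ℝ
  | [], t => t
  | a :: l, t => (a : ℝ) + 1 / cfWithTail l t

theorem cfList_append (l l' : List ℕ) : cfList (l ++ l') = cfWithTail l (cfList l') := by
  induction l with
  | nil => rfl
  | cons a l ih => simp only [List.cons_append, cfList, cfWithTail, ih]

theorem cfWithTail_pos (l : List ℕ) {t : ℝ} (ht : 0 < t) : 0 < cfWithTail l t := by
  induction l with
  | nil => exact ht
  | cons a l ih => simp only [cfWithTail]; positivity

theorem monotoneOn_cfWithTail_and_antitoneOn (l : List ℕ) :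
    (Even l.length → MonotoneOn (cfWithTail l) (Ioi 0)) ∧
      (Odd l.length → AntitoneOn (cfWithTail l) (Ioi 0)) := by
  induction l with
  | nil => exact ⟨fun _ _ _ _ _ h => h, fun h => absurd h (by decide)⟩
  | cons a l ih =>
    simp only [List.length_cons, Nat.even_add_one, Nat.not_even_iff_odd, Nat.odd_add_one]
    refine ⟨fun hl s hs t ht hst => ?_, fun hl s hs t ht hst => ?_⟩
    · have := (ih.2 hl) hs ht hst
      simp only [cfWithTail]
      gcongr
      exact cfWithTail_pos l ht
    · have := (ih.1 (Nat.not_odd_iff_even.1 hl)) hs ht hst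
      simp only [cfWithTail]
      gcongr
      exact cfWithTail_pos l hs

theorem monotoneOn_cfWithTail {l : List ℕ} (hl : Even l.length) :
    MonotoneOn (cfWithTail l) (Ioi 0) :=
  (monotoneOn_cfWithTail_and_antitoneOn l).1 hl

theorem cfList_mem_Icc_one_three {l : List ℕ} (hl : l ≠ []) (h : ∀ a ∈ l, a = 1 ∨ a = 2) :
    cfList l ∈ Icc (1 : ℝ) 3 := by
  induction l with
  | nil => exact absurd rfl hl
  | cons a l ih =>
    have ha : (a : ℝ) = 1 ∨ (a : ℝ) = 2 := by exact_mod_cast h a List.mem_cons_self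
    rcases eq_or_ne l [] with rfl | hl'
    · simp only [cfList, div_zero, add_zero, mem_Icc]
      rcases ha with ha | ha <;> rw [ha] <;> norm_num
    · obtain ⟨h1, h3⟩ := ih hl' fun b hb => h b (List.mem_cons_of_mem a hb)
      have hinv : 1 / cfList l ≤ 1 := (div_le_one (by linarith)).2 h1
      have hinv' : 0 < 1 / cfList l := by positivity
      simp only [cfList, mem_Icc]
      rcases ha with ha | ha <;> rw [ha] <;> constructor <;> linarith

theorem cfConvs_add (a : ℕ → ℕ) (N k : ℕ) :
    cfConvs a (N + k) = cfWithTail ((List.range N).map a) (cfConvs (fun n => a (N + n)) k) := by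
  rw [cfConvs, cfConvs, Nat.add_assoc, List.range_add, List.map_append, cfList_append,
    List.map_map]
  rfl

theorem CFLim.mem_Icc_cfWithTail {a : ℕ → ℕ} {x : ℝ} (h : CFLim a x) {N : ℕ} (hN : Even N)
    (ha : ∀ n, N ≤ n → a n = 1 ∨ a n = 2) :
    x ∈ Icc (cfWithTail ((List.range N).map a) 1) (cfWithTail ((List.range N).map a) 3) := by
  have hmono := monotoneOn_cfWithTail (l := (List.range N).map a) (by simpa using hN)
  refine isClosed_Icc.mem_of_tendsto h ((eventually_ge_atTop N).mono fun n hn => ?_)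
  obtain ⟨k, rfl⟩ := Nat.exists_eq_add_of_le hn
  obtain ⟨h1, h3⟩ : cfConvs (fun n => a (N + n)) k ∈ Icc (1 : ℝ) 3 :=
    cfList_mem_Icc_one_three (by simp) (by simpa using fun i _ => ha (N + i) (by omega))
  rw [cfConvs_add]
  exact ⟨hmono (by norm_num) (by simp only [mem_Ioi]; linarith) h1,
    hmono (by simp only [mem_Ioi]; linarith) (by norm_num) h3⟩

theorem epseq_mem {pre per : List ℕ} (hper : per ≠ []) {n : ℕ} (hn : pre.length ≤ n) :
    epseq pre per n ∈ per := by
  have hlt : (n - pre.length) % per.length < per.length :=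
    Nat.mod_lt _ (List.length_pos_iff.2 hper)
  simp only [epseq, not_lt.2 hn, if_false, List.getD_eq_getElem _ _ hlt]
  exact List.getElem_mem hlt

theorem IsLambda.le_of_pattern {B : ℤ → ℕ} (hB : ∀ n, B n = 1 ∨ B n = 2) {j : ℤ}
    (hpat : ∀ i : ℕ, i < 23 →
      B (j - 11 + i) = [2,2,2,1,2,1,1,2,2,2,1,2,1,1,2,2,2,1,2,1,1,2,2].getD i 0)
    {v : ℝ} (hv : IsLambda B j v) :
    v ≤ cfWithTail [2,1,1,2,2,2,1,2,1,1,2,2] 3 + cfWithTail [0,1,2,2,2,1,1,2,1,2,2,2] 3 := by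
  obtain ⟨x, y, hx, hy, rfl⟩ := hv
  have hpat' : ∀ k : ℤ, -11 ≤ k → k ≤ 11 →
      B (j + k) = [2,2,2,1,2,1,1,2,2,2,1,2,1,1,2,2,2,1,2,1,1,2,2].getD (k + 11).toNat 0 := by
    intro k hk1 hk2
    rw [← hpat (k + 11).toNat (by omega)]
    congr 1
    omega
  have hfwd : (List.range 12).map (fun n : ℕ => B (j + n)) = [2,1,1,2,2,2,1,2,1,1,2,2] := by
    refine List.ext_getElem (by simp) fun i hi _ => ?_
    simp only [List.length_map, List.length_range] at hi
    simp only [List.getElem_map, List.getElem_range]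
    rw [hpat' i (by omega) (by omega)]
    interval_cases i <;> rfl
  have hbwd : (List.range 12).map (fun n : ℕ => if n = 0 then 0 else B (j - n)) =
      [0,1,2,2,2,1,1,2,1,2,2,2] := by
    refine List.ext_getElem (by simp) fun i hi _ => ?_
    simp only [List.length_map, List.length_range] at hi
    simp only [List.getElem_map, List.getElem_range, sub_eq_add_neg]
    interval_cases i
    · rfl
    all_goals rw [if_neg (by omega), hpat' _ (by omega) (by omega)]; rfl
  have hxle := (hx.mem_Icc_cfWithTail (N := 12) (by decide) fun n _ => hB _).2
  have hyle := (hy.mem_Icc_cfWithTail (N := 12) (by decide) fun n hn => by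
    simpa only [if_neg (show n ≠ 0 by omega)] using hB _).2
  rw [hfwd] at hxle
  rw [hbwd] at hyle
  exact add_le_add hxle hyle

theorem le_add_of_cfLim_epseq {x y : ℝ} (hx : CFLim (epseq [] [2,1,1,2,2,2,1]) x)
    (hy : CFLim (epseq [0,1,2,2,2,1,1,2,1,2,2] [1,2,1,1,2,2,2]) y) :
    cfWithTail [2,1,1,2,2,2,1,2,1,1,2,2,2,1,2,1,1,2,2,2,1,2,1,1,2,2,2,1] 1 +
      cfWithTail [0,1,2,2,2,1,1,2,1,2,2,1,2,1,1,2,2,2,1,2,1,1,2,2,2,1,2,1,1,2,2,2] 1 ≤ x + y := by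
  have hxper : ∀ a ∈ [2,1,1,2,2,2,1], a = 1 ∨ a = 2 := by decide
  have hyper : ∀ a ∈ [1,2,1,1,2,2,2], a = 1 ∨ a = 2 := by decide
  have hxge := (hx.mem_Icc_cfWithTail (N := 28) (by decide) fun n _ =>
    hxper _ (epseq_mem (by simp) (Nat.zero_le n))).1
  have hyge := (hy.mem_Icc_cfWithTail (N := 32) (by decide) fun n hn =>
    hyper _ (epseq_mem (by simp) (le_trans (by decide) hn))).1
  exact add_le_add hxge hyge

theorem stmt17 (B : ℤ → ℕ) (hB : ∀ n, B n = 1 ∨ B n = 2) (j : ℤ)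
    (hpat : ∀ i : ℕ, i < 23 →
      B (j - 11 + i) = [2,2,2,1,2,1,1,2,2,2,1,2,1,1,2,2,2,1,2,1,1,2,2].getD i 0)
    (v : ℝ) (hv : IsLambda B j v) (x y : ℝ)
    (hx : CFLim (epseq [] [2,1,1,2,2,2,1]) x)
    (hy : CFLim (epseq [0,1,2,2,2,1,1,2,1,2,2] [1,2,1,1,2,2,2]) y) :
    v < cfList [2,1,1,2,2,2,1,2,1,1,2,2] + cfList [0,1,2,2,2,1,1,2,1,2,2,2] ∧
    cfList [2,1,1,2,2,2,1,2,1,1,2,2] + cfList [0,1,2,2,2,1,1,2,1,2,2,2]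
      = 12230321 / 3713986 ∧
    12230321 / 3713986 < (x + y) - 3 / 100000000 := by
  have hv' := hv.le_of_pattern hB hpat
  have hxy := le_add_of_cfLim_epseq hx hy
  have hsum : cfList [2,1,1,2,2,2,1,2,1,1,2,2] + cfList [0,1,2,2,2,1,1,2,1,2,2,2]
      = 12230321 / 3713986 := by
    norm_num [cfList]
  norm_num [cfWithTail] at hv' hxy
  exact ⟨by rw [hsum]; linarith, hsum, by linarith⟩
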